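/- arXiv:1705.01366 — 2 statements merged into one kernel-verified Lean document; each statement's English description precedes it below -/
import Mathlib

section
/- Let L/K be a finite separable field extension. Then the multiplication map L ⊗_K L → L splits as a map of L-bimodules, i.e. there is an L-bimodule map s : L → L ⊗_K L with multiplication composed with s equal to the identity. -/
open TensorProduct

universe u

/-- For a finite separable field extension `L/K`, the multiplication map
`L ⊗[K] L → L` splits as a map of `L`-bimodules: there is a map `s : L → L ⊗[K] L`
which is left `L`-linear, right `L`-linear, and a section of the multiplication map. -/
theorem exists_bimodule_splitting_of_mul
    (K L : Type u) [Field K] [Field L] [Algebra K L] [FiniteDimensional K L]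
    [Algebra.IsSeparable K L] :
    ∃ s : L →ₗ[L] L ⊗[K] L,
      (∀ (x a : L), s (x * a) = s x * (1 ⊗ₜ[K] a)) ∧
      (∀ x : L, LinearMap.mul' K L (s x) = x) := by
  have hur : Algebra.FormallyUnramified K L :=
    Algebra.FormallyUnramified.of_isSeparable K L
  obtain ⟨t, ht₁, ht₂⟩ :=
    (Algebra.FormallyUnramified.iff_exists_tensorProduct (R := K) (S := L)).mp hur
  refine ⟨{ toFun := fun x => (x ⊗ₜ[K] 1) * t
            map_add' := by intro x y; rw [add_tmul, add_mul]
            map_smul' := by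
              intro c x
              simp only [RingHom.id_apply]
              rw [Algebra.smul_def, Algebra.smul_def]
              show ((c * x) ⊗ₜ[K] (1 : L)) * t = (c ⊗ₜ[K] 1) * ((x ⊗ₜ[K] 1) * t)
              rw [← mul_assoc, Algebra.TensorProduct.tmul_mul_tmul, one_mul] },
        ?_, ?_⟩
  · intro x a
    show ((x * a) ⊗ₜ[K] (1 : L)) * t = (x ⊗ₜ[K] (1 : L)) * t * (1 ⊗ₜ[K] a)
    have key : ((a : L) ⊗ₜ[K] (1 : L)) * t = ((1 : L) ⊗ₜ[K] a) * t := by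
      have := ht₁ a
      rw [sub_mul, sub_eq_zero] at this
      exact this.symm
    calc ((x * a) ⊗ₜ[K] (1 : L)) * t
        = (x ⊗ₜ[K] (1 : L)) * ((a ⊗ₜ[K] (1 : L)) * t) := by
          rw [← mul_assoc, Algebra.TensorProduct.tmul_mul_tmul, one_mul]
      _ = (x ⊗ₜ[K] (1 : L)) * (((1 : L) ⊗ₜ[K] a) * t) := by rw [key]
      _ = (x ⊗ₜ[K] (1 : L)) * t * (1 ⊗ₜ[K] a) := by ring
  · intro x
    show LinearMap.mul' K L ((x ⊗ₜ[K] (1 : L)) * t) = x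
    have : (LinearMap.mul' K L : L ⊗[K] L →ₗ[K] L) = (Algebra.TensorProduct.lmul' K (S := L)).toLinearMap := rfl
    rw [this]
    simp only [AlgHom.toLinearMap_apply, map_mul, ht₂, mul_one,
      Algebra.TensorProduct.lmul'_apply_tmul]
end

section
/- Let R be a Noetherian domain with fraction field K, T a finitely generated commutative R-algebra, Λ a T-algebra finitely generated as a T-module, and P a finitely generated Λ-module such that P ⊗_R K is a projective Λ ⊗_R K-module. Then there exists a nonzero f ∈ R such that P_f is a projective Λ_f-module. -/
/-!
Take a presentation `π : Λᵐ → P`; its kernel is finitely generated since `Λ` is Noetherian.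
Over `K` the surjection `π_K` has a section `σ`. Clearing denominators in `σ ∘ π_K` gives a
`Λ`-linear `T : Λᵐ → Λᵐ` with `1 ⊗ T = c₀ • σ ∘ π_K`. The failures of `T` to vanish on `ker π`
and of `π ∘ T` to equal `c₀ • π` span finitely generated modules that die over `K`, so a single
nonzero `c ∈ R` kills both. Hence some `s : P → Λᵐ` satisfies `π ∘ s = c • id`, and after
inverting `c` the map `c⁻¹ s` splits `π`, making `P_c` a direct summand of `Λ_cᵐ`.
-/

open TensorProduct

universe u

section BaseChangeGadget

variable (R L B M : Type u) [CommRing R] [CommRing L] [Algebra R L]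
  [Ring B] [Algebra R B] [AddCommGroup M] [Module R M] [Module B M] [IsScalarTower R B M]
  [SMulCommClass R B M]

/-- The action of `B` on the base change `L ⊗[R] M` by `L`-linear endomorphisms. -/
noncomputable def bcRingHom : B →+* Module.End L (L ⊗[R] M) :=
  ((Module.End.baseChangeHom R L M).comp (Algebra.lsmul R R M : B →ₐ[R] Module.End R M)).toRingHom

/-- The `B ⊗[R] L`-module structure on `L ⊗[R] M`: the base change of the `B`-module `M`
along `R → L`, viewed as a module over the base-changed algebra `B ⊗[R] L`.
Here `(b ⊗ l) • (l' ⊗ m) = (l * l') ⊗ (b • m)`. -/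
noncomputable def bcModule : Module (B ⊗[R] L) (L ⊗[R] M) :=
  letI : Module B (L ⊗[R] M) := Module.compHom _ (bcRingHom R L B M)
  haveI : SMulCommClass B L (L ⊗[R] M) :=
    ⟨fun b l x => ((bcRingHom R L B M b).map_smul l x)⟩
  haveI : IsScalarTower R B (L ⊗[R] M) := by
    refine ⟨fun r b x => ?_⟩
    show bcRingHom R L B M (r • b) x = r • bcRingHom R L B M b x
    rw [Algebra.smul_def, map_mul, Module.End.mul_apply]
    rw [show bcRingHom R L B M (algebraMap R B r)
        = algebraMap R (Module.End L (L ⊗[R] M)) r from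
      ((Module.End.baseChangeHom R L M).comp
        (Algebra.lsmul R R M : B →ₐ[R] Module.End R M)).commutes r]
    rw [Module.algebraMap_end_apply]
  TensorProduct.Algebra.module (R := R) (A := B) (B := L) (M := L ⊗[R] M)

attribute [local instance] bcModule

end BaseChangeGadget

attribute [local instance] bcModule

section BaseChange

variable {R L B : Type u} [CommRing R] [CommRing L] [Algebra R L] [Ring B] [Algebra R B]
  {M : Type u} [AddCommGroup M] [Module R M] [Module B M] [IsScalarTower R B M]

lemma bc_smul_tmul (b : B) (l l' : L) (m : M) :
    (b ⊗ₜ[R] l) • (l' ⊗ₜ[R] m) = (l * l') ⊗ₜ[R] (b • m) := by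
  change bcRingHom R L B M b (l • l' ⊗ₜ[R] m) = _
  simp only [bcRingHom, Module.End.baseChangeHom, smul_tmul', smul_eq_mul]
  exact LinearMap.baseChange_tmul _ _ _

lemma one_tmul_smul (b : B) (m : M) :
    (1 : L) ⊗ₜ[R] (b • m) = (b ⊗ₜ[R] (1 : L)) • ((1 : L) ⊗ₜ[R] m) := by
  rw [bc_smul_tmul, mul_one]

instance : IsScalarTower R (B ⊗[R] L) (L ⊗[R] M) := by
  refine ⟨fun r a x => ?_⟩
  induction x with
  | zero => simp
  | add x y hx hy => simp only [smul_add, hx, hy]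
  | tmul l' m =>
    induction a with
    | zero => simp
    | add a a' ha ha' => simp only [add_smul, smul_add, ha, ha']
    | tmul b l =>
      rw [smul_tmul', bc_smul_tmul, bc_smul_tmul, smul_tmul', smul_assoc, smul_tmul]

noncomputable def bcLift {N : Type*} [AddCommGroup N] [Module (B ⊗[R] L) N] (F : L ⊗[R] M →+ N)
    (hF : ∀ (b : B) (l l' : L) (m : M),
      F ((l * l') ⊗ₜ[R] (b • m)) = (b ⊗ₜ[R] l) • F (l' ⊗ₜ[R] m)) :
    L ⊗[R] M →ₗ[B ⊗[R] L] N where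
  toFun := F
  map_add' := map_add F
  map_smul' a x := by
    simp only [RingHom.id_apply]
    induction a with
    | zero => simp
    | add a a' ha ha' => simp only [add_smul, map_add, ha, ha']
    | tmul b l =>
      induction x with
      | zero => simp
      | add x y hx hy => simp only [smul_add, map_add, hx, hy]
      | tmul l' m => simpa [bc_smul_tmul] using hF b l l' m

variable {N : Type u} [AddCommGroup N] [Module R N] [Module B N] [IsScalarTower R B N]

noncomputable def bcMap (φ : M →ₗ[B] N) : L ⊗[R] M →ₗ[B ⊗[R] L] L ⊗[R] N :=
  bcLift ((φ.restrictScalars R).lTensor L).toAddMonoidHom fun b l l' m => by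
    simp [bc_smul_tmul]

@[simp]
lemma bcMap_tmul (φ : M →ₗ[B] N) (l : L) (m : M) : bcMap φ (l ⊗ₜ[R] m) = l ⊗ₜ[R] φ m := rfl

lemma bcMap_surjective {φ : M →ₗ[B] N} (hφ : Function.Surjective φ) :
    Function.Surjective (bcMap (R := R) (L := L) φ) :=
  LinearMap.lTensor_surjective L (g := φ.restrictScalars R) hφ

/- Index types live in `Type` so that `ι → B` stays in the universe of `B`, which `bcModule`
requires. -/
variable (R L B) in
noncomputable def bcPi (ι : Type) : L ⊗[R] (ι → B) →ₗ[B ⊗[R] L] (ι → B ⊗[R] L) :=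
  bcLift ((LinearMap.pi fun j => (TensorProduct.comm R L B).toLinearMap ∘ₗ LinearMap.proj j) ∘ₗ
    piRightHom R R L (fun _ => B)).toAddMonoidHom fun b l l' x => by
      ext j
      simp

@[simp]
lemma bcPi_tmul {ι : Type} (l : L) (x : ι → B) :
    bcPi R L B ι (l ⊗ₜ x) = fun j => x j ⊗ₜ l :=
  rfl

end BaseChange

section Torsion

variable {R B M : Type*} [CommSemiring R] [Semiring B] [AddCommMonoid M] [Module R M] [Module B M]
  [SMulCommClass R B M] {S : Submonoid R}

lemma Submodule.FG.exists_smul_eq_zero {N : Submodule B M} (hN : N.FG)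
    (h : ∀ x ∈ N, ∃ c : S, c • x = 0) : ∃ c : S, ∀ x ∈ N, c • x = 0 := by
  classical
  obtain ⟨t, rfl⟩ := hN
  choose c hc using fun x : t => h x (Submodule.subset_span x.2)
  refine ⟨∏ x, c x, fun x hx => ?_⟩
  induction hx using Submodule.span_induction with
  | mem y hy =>
    rw [← Finset.prod_erase_mul _ _ (Finset.mem_univ ⟨y, hy⟩), mul_smul, hc, smul_zero]
  | zero => exact smul_zero _
  | add x y _ _ hx hy => rw [smul_add, hx, hy, add_zero]
  | smul b x _ hx => rw [smul_comm, hx, smul_zero]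

end Torsion

lemma LinearMap.exists_comp_eq_of_ker_le {B M N P : Type*} [Ring B] [AddCommGroup M] [Module B M]
    [AddCommGroup N] [Module B N] [AddCommGroup P] [Module B P] {π : M →ₗ[B] P}
    (hπ : Function.Surjective π) {T : M →ₗ[B] N} (h : ker π ≤ ker T) :
    ∃ s : P →ₗ[B] N, ∀ x, s (π x) = T x :=
  ⟨(ker π).liftQ T h ∘ₗ (π.quotKerEquivOfSurjective hπ).symm.toLinearMap, fun x => by
    simp [quotKerEquivOfSurjective_symm_apply]⟩

section Localization

variable {R L B : Type u} [CommRing R] [CommRing L] [Algebra R L] [Ring B] [Algebra R B]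
  (S : Submonoid R) [IsLocalization S L]
  {N P : Type u} [AddCommGroup N] [Module R N] [Module B N] [IsScalarTower R B N]
  [AddCommGroup P] [Module R P] [Module B P] [IsScalarTower R B P]

lemma exists_one_tmul_apply_eq_smul {ι : Type} [Fintype ι] [DecidableEq ι]
    (φ : L ⊗[R] (ι → B) →ₗ[B ⊗[R] L] L ⊗[R] N) :
    ∃ c : S, ∃ T : (ι → B) →ₗ[B] N, ∀ x, (1 : L) ⊗ₜ[R] T x = (c : R) • φ (1 ⊗ₜ x) := by
  obtain ⟨c, hc⟩ := IsLocalizedModule.exist_integer_multiples_of_finite S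
    (TensorProduct.mk R L N 1) fun i => φ (1 ⊗ₜ Pi.single i 1)
  choose V hV using fun i => LinearMap.mem_range.1 (hc i)
  refine ⟨c, Fintype.linearCombination B V, fun x => ?_⟩
  calc (1 : L) ⊗ₜ[R] Fintype.linearCombination B V x
      = ∑ i, (x i ⊗ₜ[R] (1 : L)) • (1 ⊗ₜ[R] V i) := by
        simp only [Fintype.linearCombination_apply, tmul_sum, one_tmul_smul]
    _ = ∑ i, (x i ⊗ₜ[R] (1 : L)) • ((c : R) • φ (1 ⊗ₜ Pi.single i 1)) := by
        simp only [← hV, TensorProduct.mk_apply]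
    _ = (c : R) • φ (1 ⊗ₜ x) := by
        conv_rhs => rw [pi_eq_sum_univ' x]
        simp only [tmul_sum, one_tmul_smul, map_sum, map_smul, Finset.smul_sum]
        exact Finset.sum_congr rfl fun i _ => smul_comm _ _ _

lemma exists_comp_eq_smul_of_projective {ι : Type} [Fintype ι] [DecidableEq ι]
    {π : (ι → B) →ₗ[B] P} (hπ : Function.Surjective π) (hker : (LinearMap.ker π).FG)
    [Module.Projective (B ⊗[R] L) (L ⊗[R] P)] :
    ∃ c ∈ S, ∃ s : P →ₗ[B] (ι → B), ∀ p, π (s p) = c • p := by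
  obtain ⟨σ, hσ⟩ := Module.projective_lifting_property (bcMap (R := R) (L := L) π) LinearMap.id
    (bcMap_surjective hπ)
  obtain ⟨c₀, T, hT⟩ := exists_one_tmul_apply_eq_smul S (σ ∘ₗ bcMap π)
  simp only [LinearMap.comp_apply, bcMap_tmul] at hT
  have hTker : ∀ y ∈ (LinearMap.ker π).map T, ∃ c : S, c • y = 0 := by
    rintro _ ⟨q, hq, rfl⟩
    rw [← IsLocalizedModule.eq_zero_iff S (TensorProduct.mk R L _ 1), TensorProduct.mk_apply,
      hT, LinearMap.mem_ker.1 hq, tmul_zero, map_zero, smul_zero]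
  obtain ⟨c₁, hc₁⟩ := (hker.map T).exists_smul_eq_zero hTker
  have hD : ∀ y ∈ LinearMap.range (π ∘ₗ T - (c₀ : R) • π), ∃ c : S, c • y = 0 := by
    rintro _ ⟨x, rfl⟩
    rw [← IsLocalizedModule.eq_zero_iff S (TensorProduct.mk R L _ 1), TensorProduct.mk_apply]
    have hσx := LinearMap.congr_fun hσ (1 ⊗ₜ π x)
    simp only [LinearMap.comp_apply, LinearMap.id_apply] at hσx
    rw [LinearMap.sub_apply, LinearMap.comp_apply, LinearMap.smul_apply, tmul_sub, tmul_smul,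
      ← bcMap_tmul π, hT, LinearMap.map_smul_of_tower, hσx, sub_self]
  obtain ⟨c₂, hc₂⟩ := (Submodule.fg_range _).exists_smul_eq_zero hD
  obtain ⟨s, hs⟩ := LinearMap.exists_comp_eq_of_ker_le hπ (T := ((c₂ * c₁ : S) : R) • T)
    fun q hq => by
      rw [LinearMap.mem_ker, LinearMap.smul_apply, ← Submonoid.smul_def, mul_smul,
        hc₁ _ ⟨q, hq, rfl⟩, smul_zero]
  refine ⟨c₂ * c₁ * c₀, (c₂ * c₁ * c₀).2, s, fun p => ?_⟩
  obtain ⟨x, rfl⟩ := hπ p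
  have hDx := hc₂ _ ⟨x, rfl⟩
  simp only [LinearMap.sub_apply, LinearMap.comp_apply, LinearMap.smul_apply,
    Submonoid.smul_def] at hDx
  rw [hs, LinearMap.smul_apply, LinearMap.map_smul_of_tower]
  push_cast
  linear_combination (norm := module) (c₁ : R) • hDx

end Localization

lemma projective_of_comp_eq_smul {R L B P : Type u} {ι : Type} [CommRing R] [CommRing L]
    [Algebra R L] [Ring B] [Algebra R B] [AddCommGroup P] [Module R P] [Module B P]
    [IsScalarTower R B P] [Fintype ι] [DecidableEq ι] (π : (ι → B) →ₗ[B] P)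
    (s : P →ₗ[B] (ι → B)) {c : R}
    (hc : IsUnit (algebraMap R L c)) (hs : ∀ p, π (s p) = c • p) :
    Module.Projective (B ⊗[R] L) (L ⊗[R] P) := by
  refine .of_split (bcPi R L B ι ∘ₗ bcMap s)
    (Fintype.linearCombination (B ⊗[R] L) fun j => (↑hc.unit⁻¹ : L) ⊗ₜ[R] π (Pi.single j 1))
    (LinearMap.ext fun x => ?_)
  induction x with
  | zero => simp
  | add x y hx hy => simp only [map_add, hx, hy]
  | tmul l p =>
    simp only [LinearMap.comp_apply, bcMap_tmul, bcPi_tmul, Fintype.linearCombination_apply,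
      bc_smul_tmul, ← tmul_sum, LinearMap.id_apply]
    rw [← Finset.sum_congr rfl fun j _ => map_smul π (s p j) (Pi.single j 1), ← map_sum,
      ← pi_eq_sum_univ', hs, ← smul_tmul, Algebra.smul_def, mul_left_comm, hc.mul_val_inv,
      mul_one]

theorem generically_projective_general
    (R T Λ P : Type u) [CommRing R] [IsDomain R] [IsNoetherianRing R]
    [CommRing T] [Algebra R T] [Algebra.FiniteType R T]
    [Ring Λ] [Algebra T Λ] [Module.Finite T Λ] [Algebra R Λ]
    [AddCommGroup P] [Module R P] [Module Λ P] [IsScalarTower R Λ P]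
    [Module.Finite Λ P]
    (hproj : Module.Projective (Λ ⊗[R] FractionRing R) ((FractionRing R) ⊗[R] P)) :
    ∃ f : R, f ≠ 0 ∧
      Module.Projective (Λ ⊗[R] Localization.Away f) ((Localization.Away f) ⊗[R] P) := by
  have : IsNoetherianRing T := Algebra.FiniteType.isNoetherianRing R T
  have : IsNoetherianRing Λ := isNoetherian_of_tower T inferInstance
  obtain ⟨m, π, hπ⟩ := Module.Finite.exists_fin' Λ P
  obtain ⟨c, hc, s, hs⟩ := exists_comp_eq_smul_of_projective (nonZeroDivisors R)
    (L := FractionRing R) hπ (IsNoetherian.noetherian _)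
  exact ⟨c, nonZeroDivisors.ne_zero hc,
    projective_of_comp_eq_smul π s (IsLocalization.Away.algebraMap_isUnit c) hs⟩

/-- Let `R` be a Noetherian domain with fraction field `K`, `T` a finitely generated
commutative `R`-algebra, `Λ` a `T`-algebra which is finite as a `T`-module, and `P` a
finitely generated `Λ`-module such that `P ⊗_R K` is projective over `Λ ⊗[R] K`.  Then
there is a nonzero `f ∈ R` such that `P_f` is projective over `Λ_f`. -/
theorem generically_projective
    (R T Λ P : Type u) [CommRing R] [IsDomain R] [IsNoetherianRing R]
    [CommRing T] [Algebra R T] [Algebra.FiniteType R T]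
    [Ring Λ] [Algebra T Λ] [Module.Finite T Λ] [Algebra R Λ] [IsScalarTower R T Λ]
    [AddCommGroup P] [Module R P] [Module Λ P] [IsScalarTower R Λ P]
    [SMulCommClass R Λ P] [Module.Finite Λ P]
    (hproj : Module.Projective (Λ ⊗[R] FractionRing R) ((FractionRing R) ⊗[R] P)) :
    ∃ f : R, f ≠ 0 ∧
      Module.Projective (Λ ⊗[R] Localization.Away f) ((Localization.Away f) ⊗[R] P) :=
  generically_projective_general R T Λ P hproj
end
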